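/- arXiv:2401.00571 — 2 statements merged into one kernel-verified Lean document; each statement's English description precedes it below -/
import Mathlib

section
/- Let F be a field, let V and W be F-vector spaces, and let f : V → V and g : W → W be linear endomorphisms such that (f² − 4·id_V)^n = 0 and (g² − 4·id_W)^n = 0 for some n ≥ 1. Then for every a' ∈ V and b ∈ W, the element α = Σ_{i=0}^{n−1} [ ((f² − 4)^i (f a')) ⊗ ((g² − 4)^{n−1−i} b) + ((f² − 4)^i a') ⊗ ((g² − 4)^{n−1−i} (g b)) ] of the tensor product V ⊗_F W satisfies (f ⊗ id_W − id_V ⊗ g)(α) = 0, where f ⊗ id_W and id_V ⊗ g denote the endomorphisms of V ⊗_F W induced by f and g on the respective factors. -/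
open TensorProduct in
/-- Let `F` be a field, `V, W` `F`-vector spaces, `f : V → V`, `g : W → W` linear
endomorphisms with `(f² − 4)^n = 0` and `(g² − 4)^n = 0` for some `n ≥ 1`. Then for every
`a' ∈ V` and `b ∈ W`, the element
`α = Σ_{i=0}^{n−1} ((f²−4)^i (f a')) ⊗ ((g²−4)^{n−1−i} b) + ((f²−4)^i a') ⊗ ((g²−4)^{n−1−i} (g b))`
of `V ⊗_F W` satisfies `(f ⊗ id_W − id_V ⊗ g)(α) = 0`. -/
theorem stmt1 (F V W : Type*) [Field F] [AddCommGroup V] [Module F V]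
    [AddCommGroup W] [Module F W]
    (f : Module.End F V) (g : Module.End F W) (n : ℕ) (hn : 1 ≤ n)
    (hf : (f ^ 2 - 4) ^ n = 0) (hg : (g ^ 2 - 4) ^ n = 0) (a' : V) (b : W) :
    (LinearMap.rTensor W f - LinearMap.lTensor V g)
      (∑ i ∈ Finset.range n,
        ((((f ^ 2 - 4) ^ i : Module.End F V) (f a')) ⊗ₜ[F]
            (((g ^ 2 - 4) ^ (n - 1 - i) : Module.End F W) b) +
          (((f ^ 2 - 4) ^ i : Module.End F V) a') ⊗ₜ[F]
            (((g ^ 2 - 4) ^ (n - 1 - i) : Module.End F W) (g b)))) = 0 := by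
  set A := f ^ 2 - 4 with hA
  set B := g ^ 2 - 4 with hB
  have hcf : Commute f A := ((Commute.refl f).pow_right 2).sub_right (Commute.ofNat_right f 4)
  have hcg : Commute g B := ((Commute.refl g).pow_right 2).sub_right (Commute.ofNat_right g 4)
  have h4V : ∀ (x : V), (4 : Module.End F V) x = (4 : F) • x := by
    intro x
    rw [show (4 : Module.End F V) = algebraMap F _ 4 from (map_ofNat (algebraMap F _) 4).symm,
      Module.algebraMap_end_apply]
  have h4W : ∀ (x : W), (4 : Module.End F W) x = (4 : F) • x := by
    intro x
    rw [show (4 : Module.End F W) = algebraMap F _ 4 from (map_ofNat (algebraMap F _) 4).symm,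
      Module.algebraMap_end_apply]
  have ef : ∀ i : ℕ, f * A ^ i * f = A ^ (i + 1) + 4 * A ^ i := by
    intro i
    calc f * A ^ i * f = A ^ i * f * f := by rw [(hcf.pow_right i).eq]
      _ = A ^ i * (f ^ 2) := by rw [mul_assoc, sq]
      _ = A ^ i * (A + 4) := by rw [hA, sub_add_cancel]
      _ = A ^ (i + 1) + A ^ i * 4 := by rw [mul_add, pow_succ]
      _ = A ^ (i + 1) + 4 * A ^ i := by rw [(Commute.ofNat_right (A ^ i) 4).eq]
  have eg : ∀ j : ℕ, g * B ^ j * g = B ^ (j + 1) + 4 * B ^ j := by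
    intro j
    calc g * B ^ j * g = B ^ j * g * g := by rw [(hcg.pow_right j).eq]
      _ = B ^ j * (g ^ 2) := by rw [mul_assoc, sq]
      _ = B ^ j * (B + 4) := by rw [hB, sub_add_cancel]
      _ = B ^ (j + 1) + B ^ j * 4 := by rw [mul_add, pow_succ]
      _ = B ^ (j + 1) + 4 * B ^ j := by rw [(Commute.ofNat_right (B ^ j) 4).eq]
  rw [map_sum]
  have key : ∀ i ∈ Finset.range n,
      (LinearMap.rTensor W f - LinearMap.lTensor V g)
        ((A ^ i) (f a') ⊗ₜ[F] (B ^ (n - 1 - i)) b + (A ^ i) a' ⊗ₜ[F] (B ^ (n - 1 - i)) (g b))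
      = (A ^ (i + 1)) a' ⊗ₜ[F] (B ^ (n - (i + 1))) b - (A ^ i) a' ⊗ₜ[F] (B ^ (n - i)) b := by
    intro i hi
    rw [Finset.mem_range] at hi
    have hj : n - 1 - i = n - (i + 1) := by omega
    have hj2 : n - (i + 1) + 1 = n - i := by omega
    rw [hj]
    set j := n - (i + 1) with hjdef
    have e1 : f ((A ^ i) (f a')) = (A ^ (i + 1)) a' + (4 : F) • (A ^ i) a' := by
      have := congrArg (fun (h : Module.End F V) => h a') (ef i)
      simpa [Module.End.mul_apply, LinearMap.add_apply, h4V] using this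
    have e2 : g ((B ^ j) (g b)) = (B ^ (j + 1)) b + (4 : F) • (B ^ j) b := by
      have := congrArg (fun (h : Module.End F W) => h b) (eg j)
      simpa [Module.End.mul_apply, LinearMap.add_apply, h4W] using this
    have e3 : f ((A ^ i) a') = (A ^ i) (f a') := by
      have := congrArg (fun (h : Module.End F V) => h a') (hcf.pow_right i).eq
      simpa [Module.End.mul_apply] using this
    have e4 : g ((B ^ j) b) = (B ^ j) (g b) := by
      have := congrArg (fun (h : Module.End F W) => h b) (hcg.pow_right j).eq
      simpa [Module.End.mul_apply] using this
    rw [LinearMap.sub_apply, map_add, map_add, LinearMap.rTensor_tmul, LinearMap.rTensor_tmul,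
      LinearMap.lTensor_tmul, LinearMap.lTensor_tmul, e1, e2, e3, e4, hj2]
    rw [add_tmul, tmul_add, smul_tmul]
    abel
  rw [Finset.sum_congr rfl key, Finset.sum_range_sub (fun i => (A ^ i) a' ⊗ₜ[F] (B ^ (n - i)) b)]
  have hAn : (A ^ n) a' = 0 := by rw [hf]; rfl
  have hBn : (B ^ n) b = 0 := by rw [hg]; rfl
  simp [hAn, hBn]
end

section
/- Let M be a module over a commutative ring R (e.g. a ℚ-vector space) and let u₁, u₂, u₃ be pairwise commuting R-linear endomorphisms of M such that (u_k² − 4·id_M)^n = 0 for k = 1, 2, 3 and some n ≥ 1. Then for every m ∈ M, the element α' = Σ_{i=0}^{n−1} Σ_{j=0}^{n−1} (u₁² − 4)^{i+j} (u₂² − 4)^{n−1−i} (u₃² − 4)^{n−1−j} ((u₁ + u₂)(u₁ + u₃) m) satisfies (u₁ − u₂)((u₁ − u₃)(α')) = 0. -/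
open Finset

private lemma keyId {S : Type*} [CommRing S] (x y z : S) (n : ℕ) :
    (x - y) * ((x - z) * (∑ i ∈ range n, ∑ j ∈ range n,
      (x ^ 2 - 4) ^ (i + j) * ((y ^ 2 - 4) ^ (n - 1 - i) *
        ((z ^ 2 - 4) ^ (n - 1 - j) * ((x + y) * (x + z)))))) =
    ((x ^ 2 - 4) ^ n - (y ^ 2 - 4) ^ n) * ((x ^ 2 - 4) ^ n - (z ^ 2 - 4) ^ n) := by
  have h : (x - y) * ((x - z) * (∑ i ∈ range n, ∑ j ∈ range n,
      (x ^ 2 - 4) ^ (i + j) * ((y ^ 2 - 4) ^ (n - 1 - i) *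
        ((z ^ 2 - 4) ^ (n - 1 - j) * ((x + y) * (x + z)))))) =
      ((∑ i ∈ range n, (x ^ 2 - 4) ^ i * (y ^ 2 - 4) ^ (n - 1 - i)) * ((x ^ 2 - 4) - (y ^ 2 - 4))) *
      ((∑ j ∈ range n, (x ^ 2 - 4) ^ j * (z ^ 2 - 4) ^ (n - 1 - j)) * ((x ^ 2 - 4) - (z ^ 2 - 4))) := by
    simp only [Finset.mul_sum, Finset.sum_mul, pow_add]
    rw [Finset.sum_comm]
    refine Finset.sum_congr rfl fun i _ => ?_
    refine Finset.sum_congr rfl fun j _ => ?_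
    ring
  rw [h, geom_sum₂_mul, geom_sum₂_mul]

set_option maxHeartbeats 1000000

/-- Let `M` be a module over a commutative ring `R` and `u₁, u₂, u₃` pairwise commuting
`R`-linear endomorphisms of `M` with `(u_k² − 4)^n = 0` for `k = 1,2,3` and some `n ≥ 1`.
Then for every `m ∈ M`, the element
`α' = Σ_{i,j=0}^{n−1} (u₁²−4)^{i+j} (u₂²−4)^{n−1−i} (u₃²−4)^{n−1−j} ((u₁+u₂)(u₁+u₃) m)`
satisfies `(u₁ − u₂)((u₁ − u₃)(α')) = 0`. -/
theorem stmt2 (R M : Type*) [CommRing R] [AddCommGroup M] [Module R M]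
    (u₁ u₂ u₃ : Module.End R M)
    (h12 : Commute u₁ u₂) (h13 : Commute u₁ u₃) (h23 : Commute u₂ u₃)
    (n : ℕ) (hn : 1 ≤ n)
    (h1 : (u₁ ^ 2 - 4) ^ n = 0) (h2 : (u₂ ^ 2 - 4) ^ n = 0) (h3 : (u₃ ^ 2 - 4) ^ n = 0)
    (m : M) :
    (u₁ - u₂) ((u₁ - u₃)
      (∑ i ∈ Finset.range n, ∑ j ∈ Finset.range n,
        (((u₁ ^ 2 - 4) ^ (i + j) : Module.End R M)
          (((u₂ ^ 2 - 4) ^ (n - 1 - i) : Module.End R M)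
            (((u₃ ^ 2 - 4) ^ (n - 1 - j) : Module.End R M)
              ((u₁ + u₂) ((u₁ + u₃) m))))))) = 0 := by
  have hcomm : ∀ a ∈ ({u₁, u₂, u₃} : Set (Module.End R M)),
      ∀ b ∈ ({u₁, u₂, u₃} : Set (Module.End R M)), a * b = b * a := by
    intro a ha b hb
    simp only [Set.mem_insert_iff, Set.mem_singleton_iff] at ha hb
    rcases ha with rfl | rfl | rfl <;> rcases hb with rfl | rfl | rfl
    · rfl
    · exact h12.eq
    · exact h13.eq
    · exact h12.symm.eq
    · rfl
    · exact h23.eq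
    · exact h13.symm.eq
    · exact h23.symm.eq
    · rfl
  letI cr : CommRing (Algebra.adjoin R ({u₁, u₂, u₃} : Set (Module.End R M))) :=
    Algebra.adjoinCommRingOfComm R hcomm
  set X : Algebra.adjoin R ({u₁, u₂, u₃} : Set (Module.End R M)) :=
    ⟨u₁, Algebra.subset_adjoin (by simp)⟩ with hX
  set Y : Algebra.adjoin R ({u₁, u₂, u₃} : Set (Module.End R M)) :=
    ⟨u₂, Algebra.subset_adjoin (by simp)⟩ with hY
  set Z : Algebra.adjoin R ({u₁, u₂, u₃} : Set (Module.End R M)) :=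
    ⟨u₃, Algebra.subset_adjoin (by simp)⟩ with hZ
  have h := congrArg (Subalgebra.val _) (keyId X Y Z n)
  simp only [map_mul, map_sub, map_add, map_pow, map_sum, map_ofNat,
    Subalgebra.coe_val] at h
  have hfinal : ((u₁ - u₂) * ((u₁ - u₃) * (∑ i ∈ range n, ∑ j ∈ range n,
      (u₁ ^ 2 - 4) ^ (i + j) * ((u₂ ^ 2 - 4) ^ (n - 1 - i) *
        ((u₃ ^ 2 - 4) ^ (n - 1 - j) * ((u₁ + u₂) * (u₁ + u₃)))))) : Module.End R M) = 0 := by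
    rw [h, h1, h2, h3]
    simp
  calc (u₁ - u₂) ((u₁ - u₃)
      (∑ i ∈ Finset.range n, ∑ j ∈ Finset.range n,
        (((u₁ ^ 2 - 4) ^ (i + j) : Module.End R M)
          (((u₂ ^ 2 - 4) ^ (n - 1 - i) : Module.End R M)
            (((u₃ ^ 2 - 4) ^ (n - 1 - j) : Module.End R M)
              ((u₁ + u₂) ((u₁ + u₃) m)))))))
      = ((u₁ - u₂) * ((u₁ - u₃) * (∑ i ∈ range n, ∑ j ∈ range n,
          (u₁ ^ 2 - 4) ^ (i + j) * ((u₂ ^ 2 - 4) ^ (n - 1 - i) *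
            ((u₃ ^ 2 - 4) ^ (n - 1 - j) * ((u₁ + u₂) * (u₁ + u₃))))))) m := by
        simp only [Module.End.mul_apply, LinearMap.sum_apply]
    _ = 0 := by rw [hfinal]; rfl
end
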